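/- Let n ≥ 2 and let U ⊆ ℝⁿ be an open set, and let φ : U → ℝ be smooth. Suppose that for every p ∈ U and every unit vector v ∈ ℝⁿ there are ε(p,v) > 0 and a curve γ_{p,v} : (−ε(p,v), ε(p,v)) → U solving the conformal geodesic equation for φ with γ_{p,v}(0) = p and γ_{p,v}′(0) = v. Fix p ∈ U and assume there is δ > 0 such that for each t ∈ (0, δ) all the curves γ_{p,v} (‖v‖ = 1) are defined at t and the set { γ_{p,v}(t) : ‖v‖ = 1 } equals the Euclidean sphere of some centre c(t) ∈ ℝⁿ and radius r(t) > 0. Then c(t) = p − (t²/2)·∇φ(p) + o(t²) as t → 0⁺. -/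

import Mathlib

open scoped RealInnerProductSpace
open Asymptotics Filter Topology

noncomputable section

/-- `γ` solves the conformal geodesic equation for `φ` on the interval `(-ε, ε)`,
with values in `U`:  `γ″ = ‖γ′‖² ∇φ(γ) − 2 ⟨∇φ(γ), γ′⟩ γ′`. -/
def IsConformalGeodesic {n : ℕ} (U : Set (EuclideanSpace ℝ (Fin n)))
    (φ : EuclideanSpace ℝ (Fin n) → ℝ) (ε : ℝ)
    (γ : ℝ → EuclideanSpace ℝ (Fin n)) : Prop :=
  (∀ t ∈ Set.Ioo (-ε) ε, γ t ∈ U) ∧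
  ContDiffOn ℝ 2 γ (Set.Ioo (-ε) ε) ∧
  ∀ t ∈ Set.Ioo (-ε) ε,
    deriv (deriv γ) t =
      (‖deriv γ t‖ ^ 2) • gradient φ (γ t)
        - (2 * ⟪gradient φ (γ t), deriv γ t⟫) • deriv γ t

/-! Along a conformal geodesic with `γ(0) = p` and unit initial velocity `v`,
`γ(t) = p + t v + (t²/2)(∇φ(p) − 2⟨∇φ(p), v⟩ v) + o(t²)`. The centre `c(t)` is equidistant from
`γ_v(t)` and `γ_{−v}(t)`, so `c(t)` minus the midpoint of these two points is orthogonal to the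
chord between them, whose direction is `v + o(1)`. The midpoint differs from
`p − (t²/2)∇φ(p)` by `(t²/2)(2∇φ(p) − 2⟨∇φ(p), v⟩ v) + o(t²)`, whose component along `v` is
`o(t²)`. Letting `v` run through an orthonormal basis, the chords form an almost orthonormal
frame, and this pins down `c(t) − (p − (t²/2)∇φ(p))` to `o(t²)`. -/

theorem ContDiffAt.isLittleO_taylor_two {E : Type*} [NormedAddCommGroup E] [NormedSpace ℝ E]
    {f : ℝ → E} {x₀ : ℝ} (hf : ContDiffAt ℝ 2 f x₀) :
    (fun x => f x - (f x₀ + (x - x₀) • deriv f x₀ + ((x - x₀) ^ 2 / 2) • deriv (deriv f) x₀))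
      =o[𝓝 x₀] fun x => (x - x₀) ^ 2 := by
  obtain ⟨u, hu, hfu⟩ := hf.contDiffOn le_rfl (by simp)
  obtain ⟨ρ, hρ, hball⟩ := Metric.mem_nhds_iff.mp hu
  have hx₀ : x₀ ∈ Metric.ball x₀ ρ := Metric.mem_ball_self hρ
  have h := taylor_isLittleO (convex_ball x₀ ρ) hx₀ (hfu.mono hball)
  rw [nhdsWithin_eq_nhds.mpr (Metric.ball_mem_nhds x₀ hρ)] at h
  convert h using 3 with x
  simp only [taylor_within_apply, Finset.sum_range_succ, Finset.sum_range_zero,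
    iteratedDerivWithin_of_isOpen Metric.isOpen_ball hx₀, iteratedDeriv_eq_iterate]
  norm_num [div_eq_inv_mul]

section Asymptotics

variable {α E F : Type*} [NormedAddCommGroup E] [InnerProductSpace ℝ E]
  [SeminormedAddCommGroup F] {l : Filter α}

theorem Asymptotics.IsLittleO.inner_isBigO {f g : α → E} {k₁ k₂ : α → ℝ}
    (hf : f =o[l] k₁) (hg : g =O[l] k₂) : (fun x => ⟪f x, g x⟫) =o[l] fun x => k₁ x * k₂ x :=
  (isBigO_of_le l fun x => by simpa using abs_real_inner_le_norm (f x) (g x)).trans_isLittleO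
    (hf.norm_left.mul_isBigO hg.norm_left)

theorem OrthonormalBasis.isLittleO_of_inner {ι : Type*} [Fintype ι] (b : OrthonormalBasis ι ℝ E)
    {u : ι → α → E} (hu : ∀ i, Tendsto (u i) l (𝓝 (b i))) {w : α → E} {k : α → F}
    (hw : ∀ i, (fun x => ⟪u i x, w x⟫) =o[l] k) : w =o[l] k := by
  have hsmall : ∀ᶠ x in l, ∑ i, ‖u i x - b i‖ ≤ 1 / 2 := by
    have : Tendsto (fun x => ∑ i, ‖u i x - b i‖) l (𝓝 0) := by
      simpa using tendsto_finsetSum Finset.univ fun i _ => ((hu i).sub_const (b i)).norm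
    exact this.eventually (eventually_le_nhds (by norm_num))
  have hbound : ∀ᶠ x in l, ‖w x‖ ≤ 2 * ∑ i, |⟪u i x, w x⟫| := by
    filter_upwards [hsmall] with x hx
    have hcoord : ∀ i, |⟪b i, w x⟫| ≤ |⟪u i x, w x⟫| + ‖u i x - b i‖ * ‖w x‖ := fun i => by
      have hsplit : ⟪b i, w x⟫ = ⟪u i x, w x⟫ - ⟪u i x - b i, w x⟫ := by
        rw [inner_sub_left]; ring
      rw [hsplit]
      exact (abs_sub _ _).trans (add_le_add_right (abs_real_inner_le_norm _ _) _)
    have : ‖w x‖ ≤ ∑ i, |⟪u i x, w x⟫| + (∑ i, ‖u i x - b i‖) * ‖w x‖ :=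
      calc ‖w x‖ = ‖∑ i, ⟪b i, w x⟫ • b i‖ := by rw [b.sum_repr']
        _ ≤ ∑ i, |⟪b i, w x⟫| := by
          refine (norm_sum_le _ _).trans (Finset.sum_le_sum fun i _ => ?_)
          simp [norm_smul, b.orthonormal.1 i]
        _ ≤ ∑ i, (|⟪u i x, w x⟫| + ‖u i x - b i‖ * ‖w x‖) :=
          Finset.sum_le_sum fun i _ => hcoord i
        _ = _ := by rw [Finset.sum_add_distrib, Finset.sum_mul]
    nlinarith [norm_nonneg (w x)]
  refine (IsBigO.of_bound 2 ?_).trans_isLittleO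
    (IsLittleO.fun_sum (s := Finset.univ) fun i _ => (hw i).abs_left)
  filter_upwards [hbound] with x hx
  simpa [Finset.abs_sum_of_nonneg] using hx

end Asymptotics

section Centre

variable {E : Type*} [NormedAddCommGroup E] [InnerProductSpace ℝ E]

def conformalGeodesicAccel (g v : E) : E := ‖v‖ ^ 2 • g - (2 * ⟪g, v⟫) • v

def conformalGeodesicJet (p g v : E) (t : ℝ) : E :=
  p + t • v + (t ^ 2 / 2) • conformalGeodesicAccel g v

theorem conformalGeodesicAccel_neg (g v : E) :
    conformalGeodesicAccel g (-v) = conformalGeodesicAccel g v := by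
  simp [conformalGeodesicAccel]

theorem inner_conformalGeodesicAccel_add {g v : E} (hv : ‖v‖ = 1) :
    ⟪v, conformalGeodesicAccel g v + g⟫ = 0 := by
  simp only [conformalGeodesicAccel, hv, inner_add_right, inner_sub_right, inner_smul_right,
    real_inner_self_eq_norm_sq, real_inner_comm g v]
  ring

theorem IsConformalGeodesic.isLittleO_sub_jet {n : ℕ} {U : Set (EuclideanSpace ℝ (Fin n))}
    {φ : EuclideanSpace ℝ (Fin n) → ℝ} {ε : ℝ} {γ : ℝ → EuclideanSpace ℝ (Fin n)}
    (hγ : IsConformalGeodesic U φ ε γ) (hε : 0 < ε) :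
    (fun t => γ t - conformalGeodesicJet (γ 0) (gradient φ (γ 0)) (deriv γ 0) t)
      =o[𝓝 0] fun t => t ^ 2 := by
  have h0 : (0 : ℝ) ∈ Set.Ioo (-ε) ε := ⟨neg_lt_zero.mpr hε, hε⟩
  have h := (hγ.2.1.contDiffAt (isOpen_Ioo.mem_nhds h0)).isLittleO_taylor_two
  rw [hγ.2.2 0 h0] at h
  simpa [conformalGeodesicJet, conformalGeodesicAccel] using h

variable {p g v : E} {P Q c : ℝ → E}

theorem tendsto_chord_of_isLittleO_sub_jet
    (hP : (fun t => P t - conformalGeodesicJet p g v t) =o[𝓝[>] 0] fun t => t ^ 2)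
    (hQ : (fun t => Q t - conformalGeodesicJet p g (-v) t) =o[𝓝[>] 0] fun t => t ^ 2) :
    Tendsto (fun t => (2 * t)⁻¹ • (P t - Q t)) (𝓝[>] 0) (𝓝 v) := by
  have hsq : (fun t : ℝ => t ^ 2) =O[𝓝[>] 0] fun t => 2 * t :=
    ((isLittleO_pow_pow one_lt_two).mono nhdsWithin_le_nhds).isBigO.trans
      (by simpa using isBigO_self_const_mul two_ne_zero (fun t : ℝ => t) _)
  have hR := ((hP.sub hQ).trans_isBigO hsq).tendsto_inv_smul_nhds_zero
  rw [← add_zero v]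
  refine (hR.const_add v).congr' ?_
  filter_upwards [self_mem_nhdsWithin] with t (ht : 0 < t)
  have hdiff : P t - conformalGeodesicJet p g v t - (Q t - conformalGeodesicJet p g (-v) t)
      = (P t - Q t) - (2 * t) • v := by
    rw [conformalGeodesicJet, conformalGeodesicJet, conformalGeodesicAccel_neg]; module
  rw [hdiff, smul_sub, smul_smul, inv_mul_cancel₀ (by positivity), one_smul, add_sub_cancel]

theorem isLittleO_inner_chord_centre (hv : ‖v‖ = 1)
    (hP : (fun t => P t - conformalGeodesicJet p g v t) =o[𝓝[>] 0] fun t => t ^ 2)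
    (hQ : (fun t => Q t - conformalGeodesicJet p g (-v) t) =o[𝓝[>] 0] fun t => t ^ 2)
    (hc : ∀ᶠ t in 𝓝[>] 0, dist (P t) (c t) = dist (Q t) (c t)) :
    (fun t => ⟪(2 * t)⁻¹ • (P t - Q t), c t - (p - (t ^ 2 / 2) • g)⟫)
      =o[𝓝[>] 0] fun t => t ^ 2 := by
  set A := conformalGeodesicAccel g v + g
  set R := fun t => (1 / 2 : ℝ) •
    (P t - conformalGeodesicJet p g v t + (Q t - conformalGeodesicJet p g (-v) t))
  set y := fun t => midpoint ℝ (P t) (Q t) - (p - (t ^ 2 / 2) • g)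
  have hy : ∀ t, y t = (t ^ 2 / 2) • A + R t := fun t => by
    simp only [y, R, A, conformalGeodesicJet, midpoint_eq_smul_add, invOf_eq_inv,
      conformalGeodesicAccel_neg]
    module
  have hR : R =o[𝓝[>] 0] fun t => t ^ 2 := (hP.add hQ).const_smul_left (1 / 2 : ℝ)
  have hyO : y =O[𝓝[>] 0] fun t => t ^ 2 := by
    have hA : (fun t : ℝ => (t ^ 2 / 2) • A) =O[𝓝[>] 0] fun t => t ^ 2 :=
      .of_bound ‖A‖ (Eventually.of_forall fun t => by
        rw [norm_smul, norm_div, Real.norm_two, mul_comm]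
        nlinarith [norm_nonneg A, norm_nonneg (t ^ 2)])
    simpa only [← hy] using hA.add hR.isBigO
  have hsplit : ∀ᶠ t in 𝓝[>] 0, ⟪v, R t⟫ + ⟪(2 * t)⁻¹ • (P t - Q t) - v, y t⟫
      = ⟪(2 * t)⁻¹ • (P t - Q t), c t - (p - (t ^ 2 / 2) • g)⟫ := by
    filter_upwards [hc] with t hct
    have hkite : ⟪P t - Q t, c t - midpoint ℝ (P t) (Q t)⟫ = 0 := by
      have h := EuclideanGeometry.inner_vsub_vsub_of_dist_eq_of_dist_eq
        (dist_left_midpoint_eq_dist_right_midpoint (𝕜 := ℝ) (P t) (Q t)) hct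
      rw [vsub_eq_sub, vsub_eq_sub, real_inner_comm, ← neg_sub, inner_neg_left] at h
      linarith
    have hcy : c t - (p - (t ^ 2 / 2) • g) = (c t - midpoint ℝ (P t) (Q t)) + y t := by
      simp only [y]; abel
    have hvy : ⟪v, y t⟫ = ⟪v, R t⟫ := by
      rw [hy, inner_add_right, real_inner_smul_right, inner_conformalGeodesicAccel_add hv,
        mul_zero, zero_add]
    rw [hcy, inner_add_right, real_inner_smul_left, hkite, inner_sub_left, hvy]
    ring
  refine IsLittleO.congr' ?_ hsplit (EventuallyEq.refl _ _)
  have hchord := tendsto_sub_nhds_zero_iff.mpr (tendsto_chord_of_isLittleO_sub_jet hP hQ)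
  exact (((innerSL ℝ v).isBigO_comp R _).trans_isLittleO hR).add
    (by simpa using ((isLittleO_one_iff ℝ).mpr hchord).inner_isBigO hyO)

end Centre

theorem geodesic_sphere_centre_expansion_general {n : ℕ}
    (U : Set (EuclideanSpace ℝ (Fin n)))
    (φ : EuclideanSpace ℝ (Fin n) → ℝ)
    (ε : EuclideanSpace ℝ (Fin n) → EuclideanSpace ℝ (Fin n) → ℝ)
    (γ : EuclideanSpace ℝ (Fin n) → EuclideanSpace ℝ (Fin n) → ℝ →
      EuclideanSpace ℝ (Fin n))
    (hgeo : ∀ p ∈ U, ∀ v : EuclideanSpace ℝ (Fin n), ‖v‖ = 1 →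
      0 < ε p v ∧ IsConformalGeodesic U φ (ε p v) (γ p v) ∧
      γ p v 0 = p ∧ deriv (γ p v) 0 = v)
    (p : EuclideanSpace ℝ (Fin n)) (hp : p ∈ U)
    (δ : ℝ) (hδ : 0 < δ)
    (c : ℝ → EuclideanSpace ℝ (Fin n)) (r : ℝ → ℝ)
    (hsph : ∀ t ∈ Set.Ioo (0 : ℝ) δ,
      (∀ v : EuclideanSpace ℝ (Fin n), ‖v‖ = 1 → t < ε p v) ∧
      0 < r t ∧
      {x | ∃ v : EuclideanSpace ℝ (Fin n), ‖v‖ = 1 ∧ γ p v t = x} =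
        {x | ‖x - c t‖ = r t}) :
    (fun t : ℝ => c t - (p - (t ^ 2 / 2) • gradient φ p))
      =o[𝓝[>] 0] (fun t : ℝ => t ^ 2) := by
  have hjet : ∀ v : EuclideanSpace ℝ (Fin n), ‖v‖ = 1 →
      (fun t => γ p v t - conformalGeodesicJet p (gradient φ p) v t)
        =o[𝓝[>] 0] fun t => t ^ 2 := fun v hv => by
    obtain ⟨hε, hγ, hγ0, hγ'0⟩ := hgeo p hp v hv
    simpa only [hγ0, hγ'0] using (hγ.isLittleO_sub_jet hε).mono nhdsWithin_le_nhds
  have hsphere : ∀ v : EuclideanSpace ℝ (Fin n), ‖v‖ = 1 →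
      ∀ᶠ t in 𝓝[>] 0, dist (γ p v t) (c t) = dist (γ p (-v) t) (c t) := fun v hv => by
    filter_upwards [Ioo_mem_nhdsGT hδ] with t ht
    have hr : ∀ w : EuclideanSpace ℝ (Fin n), ‖w‖ = 1 → dist (γ p w t) (c t) = r t :=
      fun w hw => by
        rw [dist_eq_norm]
        exact (Set.ext_iff.mp (hsph t ht).2.2 _).mp ⟨w, hw, rfl⟩
    rw [hr v hv, hr (-v) (by rwa [norm_neg])]
  set b := EuclideanSpace.basisFun (Fin n) ℝ
  have hb : ∀ i, ‖b i‖ = 1 := b.orthonormal.1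
  have hb' : ∀ i, ‖-b i‖ = 1 := fun i => by rw [norm_neg, hb]
  exact b.isLittleO_of_inner
    (fun i => tendsto_chord_of_isLittleO_sub_jet (hjet _ (hb i)) (hjet _ (hb' i)))
    (fun i => isLittleO_inner_chord_centre (hb i) (hjet _ (hb i)) (hjet _ (hb' i))
      (hsphere _ (hb i)))

/-- The Euclidean centres of the geodesic hyperspheres of the conformal metric
`e^{2φ}·g_euc` centred at `p` satisfy `c(t) = p − (t²/2)·∇φ(p) + o(t²)` as `t → 0⁺`. -/
theorem geodesic_sphere_centre_expansion {n : ℕ} (hn : 2 ≤ n)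
    (U : Set (EuclideanSpace ℝ (Fin n))) (hU : IsOpen U)
    (φ : EuclideanSpace ℝ (Fin n) → ℝ) (hφ : ContDiffOn ℝ (⊤ : ℕ∞) φ U)
    (ε : EuclideanSpace ℝ (Fin n) → EuclideanSpace ℝ (Fin n) → ℝ)
    (γ : EuclideanSpace ℝ (Fin n) → EuclideanSpace ℝ (Fin n) → ℝ →
      EuclideanSpace ℝ (Fin n))
    (hgeo : ∀ p ∈ U, ∀ v : EuclideanSpace ℝ (Fin n), ‖v‖ = 1 →
      0 < ε p v ∧ IsConformalGeodesic U φ (ε p v) (γ p v) ∧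
      γ p v 0 = p ∧ deriv (γ p v) 0 = v)
    (p : EuclideanSpace ℝ (Fin n)) (hp : p ∈ U)
    (δ : ℝ) (hδ : 0 < δ)
    (c : ℝ → EuclideanSpace ℝ (Fin n)) (r : ℝ → ℝ)
    (hsph : ∀ t ∈ Set.Ioo (0 : ℝ) δ,
      (∀ v : EuclideanSpace ℝ (Fin n), ‖v‖ = 1 → t < ε p v) ∧
      0 < r t ∧
      {x | ∃ v : EuclideanSpace ℝ (Fin n), ‖v‖ = 1 ∧ γ p v t = x} =
        {x | ‖x - c t‖ = r t}) :
    (fun t : ℝ => c t - (p - (t ^ 2 / 2) • gradient φ p))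
      =o[𝓝[>] 0] (fun t : ℝ => t ^ 2) :=
  geodesic_sphere_centre_expansion_general U φ ε γ hgeo p hp δ hδ c r hsph
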